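/- Restriction lemma for store typing: (a) if ℓ ∉ dom(σ), then Γ ⊢ s : σ if and only if Γ ⊢ set_ℓ(V, s) : σ; (b) if Γ ⊢ set_ℓ(V, s) : σ and σ ≤S ⟨ℓ:δ⟩ with ⟨ℓ:δ⟩ not equivalent to ωS, then Γ ⊢ V : δ. -/

import Mathlib

open Classical

/-- Locations -/
abbrev Loc := ℕ

/-! ### Syntax of λimp (de Bruijn indices) -/

mutual
inductive Val : Type where
  | var : ℕ → Val
  | lam : Comp → Val
inductive Comp : Type where
  | ret  : Val → Comp                     -- unit V
  | bind : Comp → Val → Comp              -- M ⋆ V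
  | get  : Loc → Comp → Comp              -- get_ℓ(λ.M)
  | set  : Loc → Val → Comp → Comp        -- set_ℓ(V, M)
end

/-! ### Store and lookup terms -/

mutual
inductive Store : Type where
  | emp : Store
  | upd : Loc → Lkp → Store → Store       -- set_ℓ(u, s)
inductive Lkp : Type where
  | val : Val → Lkp
  | lkp : Loc → Store → Lkp               -- get_ℓ(s)
end

def Store.dom : Store → Finset Loc
  | .emp => ∅
  | .upd ℓ _ s => insert ℓ s.dom

/-- s ∖ ℓ -/
def Store.erase (ℓ : Loc) : Store → Store
  | .emp => .emp
  | .upd ℓ' u s => if ℓ' = ℓ then s.erase ℓ else .upd ℓ' u (s.erase ℓ)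

/-! ### The equational store theory -/

mutual
/-- ⊢ s = t -/
inductive StEq : Store → Store → Prop where
  | refl (s) : StEq s s
  | symm : StEq s t → StEq t s
  | trans : StEq s t → StEq t r → StEq s r
  | congr : LkEq u u' → StEq s s' → StEq (.upd ℓ u s) (.upd ℓ u' s')
  | setGet (h : ℓ ∈ s.dom) : StEq (.upd ℓ (.lkp ℓ s) s) s
  | overwrite : StEq (.upd ℓ u (.upd ℓ w s)) (.upd ℓ u s)
  | commute (h : ℓ ≠ ℓ') :
      StEq (.upd ℓ u (.upd ℓ' w s)) (.upd ℓ' w (.upd ℓ u s))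
/-- ⊢ u = u' -/
inductive LkEq : Lkp → Lkp → Prop where
  | refl (u) : LkEq u u
  | symm : LkEq u v → LkEq v u
  | trans : LkEq u v → LkEq v w → LkEq u w
  | congr (ℓ) (h : ℓ ∈ s.dom) : StEq s s' → LkEq (.lkp ℓ s) (.lkp ℓ s')
  | getSet : LkEq (.lkp ℓ (.upd ℓ u s)) u
  | getSetNe (h : ℓ ≠ ℓ') : LkEq (.lkp ℓ (.upd ℓ' u s)) (.lkp ℓ s)
end

/-- Extensional equivalence s ≃ t of store terms. -/
def StExtEq (s t : Store) : Prop :=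
  s.dom = t.dom ∧ ∀ ℓ ∈ s.dom, LkEq (.lkp ℓ s) (.lkp ℓ t)

/-! ### Normal forms of stores -/

def Store.size : Store → ℕ
  | .emp => 0
  | .upd _ _ s => s.size + 1

theorem Store.erase_size (ℓ : Loc) : (s : Store) → (s.erase ℓ).size ≤ s.size
  | .emp => le_refl _
  | .upd ℓ' u s => by
      unfold Store.erase
      by_cases h : ℓ' = ℓ
      · simpa [h, Store.size] using le_trans (Store.erase_size ℓ s) (Nat.le_succ _)
      · simpa [h, Store.size] using Nat.succ_le_succ (Store.erase_size ℓ s)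

def Store.nf : Store → Store
  | .emp => .emp
  | .upd ℓ u s => .upd ℓ u ((s.erase ℓ).nf)
termination_by s => s.size
decreasing_by
  simp only [Store.size]
  exact Nat.lt_succ_of_le (Store.erase_size ℓ s)

/-! ### Closedness -/

mutual
def Val.ClosedUnder : ℕ → Val → Prop
  | k, .var n => n < k
  | k, .lam M => Comp.ClosedUnder (k+1) M
def Comp.ClosedUnder : ℕ → Comp → Prop
  | k, .ret V => Val.ClosedUnder k V
  | k, .bind M V => Comp.ClosedUnder k M ∧ Val.ClosedUnder k V
  | k, .get _ M => Comp.ClosedUnder (k+1) M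
  | k, .set _ V M => Val.ClosedUnder k V ∧ Comp.ClosedUnder k M
end

mutual
def Store.Closed : Store → Prop
  | .emp => True
  | .upd _ u s => u.Closed ∧ s.Closed
def Lkp.Closed : Lkp → Prop
  | .val V => Val.ClosedUnder 0 V
  | .lkp _ s => s.Closed
end

/-! ### Substitution -/

mutual
def Val.shiftAux (c : ℕ) : Val → Val
  | .var n => if n < c then .var n else .var (n+1)
  | .lam M => .lam (Comp.shiftAux (c+1) M)
def Comp.shiftAux (c : ℕ) : Comp → Comp
  | .ret V => .ret (V.shiftAux c)
  | .bind M V => .bind (M.shiftAux c) (V.shiftAux c)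
  | .get ℓ M => .get ℓ (M.shiftAux (c+1))
  | .set ℓ V M => .set ℓ (V.shiftAux c) (M.shiftAux c)
end

mutual
/-- capture-avoiding substitution of `W` for the variable `k` in a value -/
def Val.substV (k : ℕ) (W : Val) : Val → Val
  | .var n => if n = k then W else if k < n then .var (n-1) else .var n
  | .lam M => .lam (Comp.substC (k+1) (Val.shiftAux 0 W) M)
/-- capture-avoiding substitution of `W` for the variable `k` in a computation: M[W/k] -/
def Comp.substC (k : ℕ) (W : Val) : Comp → Comp
  | .ret V => .ret (Val.substV k W V)
  | .bind M V => .bind (Comp.substC k W M) (Val.substV k W V)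
  | .get ℓ M => .get ℓ (Comp.substC (k+1) (Val.shiftAux 0 W) M)
  | .set ℓ V M => .set ℓ (Val.substV k W V) (Comp.substC k W M)
end

/-- simultaneous substitution of closed values for the free variables 0,…,n-1 -/
def msubst (Vs : List Val) (M : Comp) : Comp :=
  Vs.foldl (fun acc V => Comp.substC 0 V acc) M

/-! ### Small-step reduction on configurations -/

inductive Red : Comp × Store → Comp × Store → Prop where
  | beta : Red (.bind (.ret V) (.lam M), s) (Comp.substC 0 V M, s)
  | bindl : Red (M, s) (N, t) → Red (.bind M V, s) (.bind N V, t)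
  | get : LkEq (.lkp ℓ s) (.val V) → Red (.get ℓ M, s) (Comp.substC 0 V M, s)
  | set : Red (.set ℓ V M, s) (M, .upd ℓ (.val V) s)

/-- reflexive-transitive closure →* -/
def RedStar : Comp × Store → Comp × Store → Prop := Relation.ReflTransGen Red

/-! ### Big-step convergence -/

inductive BigStep : Comp → Store → Val → Store → Prop where
  | ret : BigStep (.ret V) s V s
  | bind : BigStep M s V s' → BigStep (Comp.substC 0 V N) s' W t →
      BigStep (.bind M (.lam N)) s W t
  | get : LkEq (.lkp ℓ s) (.val V) → BigStep (Comp.substC 0 V M) s W t →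
      BigStep (.get ℓ M) s W t
  | set : BigStep M (.upd ℓ (.val V) s) W t → BigStep (.set ℓ V M) s W t

/-- the partial function M(s): the result (V,t) if (M,s) ⇓ (V,t), and ⊥ (i.e. `none`) otherwise -/
noncomputable def run (M : Comp) (s : Store) : Option (Val × Store) :=
  if h : ∃ p : Val × Store, BigStep M s p.1 p.2 then some h.choose else none

/-! ### Intersection types of the four sorts -/

mutual
/-- value types δ -/
inductive TyD : Type where
  | arrow : TyD → TyT → TyD
  | inter : TyD → TyD → TyD
  | omega : TyD
/-- store types σ -/
inductive TyS : Type where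
  | loc : Loc → TyD → TyS
  | inter : TyS → TyS → TyS
  | omega : TyS
/-- result types κ -/
inductive TyC : Type where
  | prod : TyD → TyS → TyC
  | inter : TyC → TyC → TyC
  | omega : TyC
/-- computation types τ -/
inductive TyT : Type where
  | arrow : TyS → TyC → TyT
  | inter : TyT → TyT → TyT
  | omega : TyT
end

def TyS.domS : TyS → Finset Loc
  | .loc ℓ _ => {ℓ}
  | .inter σ σ' => σ.domS ∪ σ'.domS
  | .omega => ∅

/-! ### Subtyping -/

mutual
inductive SubD : TyD → TyD → Prop where
  | refl (δ) : SubD δ δ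
  | trans : SubD δ₁ δ₂ → SubD δ₂ δ₃ → SubD δ₁ δ₃
  | leOmega (δ) : SubD δ .omega
  | interLeft : SubD (TyD.inter δ δ') δ
  | interRight : SubD (TyD.inter δ δ') δ'
  | interGlb : SubD δ δ₁ → SubD δ δ₂ → SubD δ (TyD.inter δ₁ δ₂)
  | interMono : SubD δ₁ δ₁' → SubD δ₂ δ₂' → SubD (TyD.inter δ₁ δ₂) (TyD.inter δ₁' δ₂')
  | omegaArrow : SubD .omega (.arrow .omega .omega)
  | arrowInter : SubD ((TyD.arrow δ τ).inter (.arrow δ τ')) (TyD.arrow δ (TyT.inter τ τ'))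
  | arrowMono : SubD δ' δ → SubT τ τ' → SubD (.arrow δ τ) (.arrow δ' τ')
inductive SubS : TyS → TyS → Prop where
  | refl (σ) : SubS σ σ
  | trans : SubS σ₁ σ₂ → SubS σ₂ σ₃ → SubS σ₁ σ₃
  | leOmega (σ) : SubS σ .omega
  | interLeft : SubS (TyS.inter σ σ') σ
  | interRight : SubS (TyS.inter σ σ') σ'
  | interGlb : SubS σ σ₁ → SubS σ σ₂ → SubS σ (TyS.inter σ₁ σ₂)
  | interMono : SubS σ₁ σ₁' → SubS σ₂ σ₂' → SubS (TyS.inter σ₁ σ₂) (TyS.inter σ₁' σ₂')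
  | locInter : SubS ((TyS.loc ℓ δ).inter (.loc ℓ δ')) (TyS.loc ℓ (TyD.inter δ δ'))
  | locMono : SubD δ δ' → SubS (.loc ℓ δ) (.loc ℓ δ')
inductive SubC : TyC → TyC → Prop where
  | refl (κ) : SubC κ κ
  | trans : SubC κ₁ κ₂ → SubC κ₂ κ₃ → SubC κ₁ κ₃
  | leOmega (κ) : SubC κ .omega
  | interLeft : SubC (TyC.inter κ κ') κ
  | interRight : SubC (TyC.inter κ κ') κ'
  | interGlb : SubC κ κ₁ → SubC κ κ₂ → SubC κ (TyC.inter κ₁ κ₂)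
  | interMono : SubC κ₁ κ₁' → SubC κ₂ κ₂' → SubC (TyC.inter κ₁ κ₂) (TyC.inter κ₁' κ₂')
  | omegaProd : SubC .omega (.prod .omega .omega)
  | prodInter : SubC ((TyC.prod δ σ).inter (.prod δ' σ')) (TyC.prod (TyD.inter δ δ') (TyS.inter σ σ'))
  | prodMono : SubD δ δ' → SubS σ σ' → SubC (.prod δ σ) (.prod δ' σ')
inductive SubT : TyT → TyT → Prop where
  | refl (τ) : SubT τ τ
  | trans : SubT τ₁ τ₂ → SubT τ₂ τ₃ → SubT τ₁ τ₃
  | leOmega (τ) : SubT τ .omega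
  | interLeft : SubT (TyT.inter τ τ') τ
  | interRight : SubT (TyT.inter τ τ') τ'
  | interGlb : SubT τ τ₁ → SubT τ τ₂ → SubT τ (TyT.inter τ₁ τ₂)
  | interMono : SubT τ₁ τ₁' → SubT τ₂ τ₂' → SubT (TyT.inter τ₁ τ₂) (TyT.inter τ₁' τ₂')
  | omegaArrow : SubT .omega (.arrow .omega .omega)
  | arrowInter : SubT ((TyT.arrow σ κ).inter (.arrow σ κ')) (TyT.arrow σ (TyC.inter κ κ'))
  | arrowMono : SubS σ' σ → SubC κ κ' → SubT (.arrow σ κ) (.arrow σ' κ')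
end

/-! ### Finite intersections -/

def InterD (l : List TyD) : TyD := l.foldr TyD.inter TyD.omega
def InterS (l : List TyS) : TyS := l.foldr TyS.inter TyS.omega
def InterC (l : List TyC) : TyC := l.foldr TyC.inter TyC.omega
def InterT (l : List TyT) : TyT := l.foldr TyT.inter TyT.omega

/-! ### Type assignment -/

/-- typing contexts (de Bruijn) -/
abbrev Ctx := List TyD

mutual
inductive TypV : Ctx → Val → TyD → Prop where
  | var : Γ[n]? = some δ → TypV Γ (.var n) δ
  | lam : TypC (δ :: Γ) M τ → TypV Γ (.lam M) (.arrow δ τ)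
  | omega : TypV Γ V .omega
  | inter : TypV Γ V δ → TypV Γ V δ' → TypV Γ V (TyD.inter δ δ')
  | sub : TypV Γ V δ → SubD δ δ' → TypV Γ V δ'
inductive TypC : Ctx → Comp → TyT → Prop where
  | ret : TypV Γ V δ → TypC Γ (.ret V) (.arrow σ (.prod δ σ))
  | bind : TypC Γ M (.arrow σ (.prod δ' σ')) →
      TypV Γ V (.arrow δ' (.arrow σ' (.prod δ'' σ''))) →
      TypC Γ (.bind M V) (.arrow σ (.prod δ'' σ''))
  | get : TypC (δ :: Γ) M (.arrow σ κ) →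
      TypC Γ (.get ℓ M) (.arrow ((TyS.loc ℓ δ).inter σ) κ)
  | set : TypV Γ V δ → TypC Γ M (.arrow ((TyS.loc ℓ δ).inter σ) κ) →
      ℓ ∉ σ.domS → TypC Γ (.set ℓ V M) (.arrow σ κ)
  | omega : TypC Γ M .omega
  | inter : TypC Γ M τ → TypC Γ M τ' → TypC Γ M (TyT.inter τ τ')
  | sub : TypC Γ M τ → SubT τ τ' → TypC Γ M τ'
end

mutual
inductive TypS : Ctx → Store → TyS → Prop where
  | updA : TypL Γ u δ → TypS Γ (.upd ℓ u s) (.loc ℓ δ)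
  | updB : TypS Γ s (.loc ℓ' δ) → ℓ ≠ ℓ' → TypS Γ (.upd ℓ u s) (.loc ℓ' δ)
  | omega : TypS Γ s .omega
  | inter : TypS Γ s σ → TypS Γ s σ' → TypS Γ s (TyS.inter σ σ')
  | sub : TypS Γ s σ → SubS σ σ' → TypS Γ s σ'
inductive TypL : Ctx → Lkp → TyD → Prop where
  | val : TypV Γ V δ → TypL Γ (.val V) δ
  | lkp : TypS Γ s (.loc ℓ δ) → TypL Γ (.lkp ℓ s) δ
  | omega : TypL Γ u .omega
  | inter : TypL Γ u δ → TypL Γ u δ' → TypL Γ u (TyD.inter δ δ')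
  | sub : TypL Γ u δ → SubD δ δ' → TypL Γ u δ'
end

inductive TypConf : Ctx → Comp → Store → TyC → Prop where
  | conf : TypC Γ M (.arrow σ κ) → TypS Γ s σ → TypConf Γ M s κ
  | omega : TypConf Γ M s .omega
  | inter : TypConf Γ M s κ → TypConf Γ M s κ' → TypConf Γ M s (TyC.inter κ κ')
  | sub : TypConf Γ M s κ → SubC κ κ' → TypConf Γ M s κ'

/-! ### Saturated sets -/

mutual
def SatD : TyD → Set Val
  | .omega => {V | Val.ClosedUnder 0 V}
  | .arrow δ τ =>
      {V | Val.ClosedUnder 0 V ∧ ∀ W ∈ SatD δ, Comp.bind (.ret W) V ∈ SatT τ}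
  | .inter δ δ' => SatD δ ∩ SatD δ'
def SatS : TyS → Set Store
  | .omega => {s | s.Closed}
  | .loc ℓ δ =>
      {s | s.Closed ∧ ℓ ∈ s.dom ∧ ∃ V ∈ SatD δ, LkEq (.lkp ℓ s) (.val V)}
  | .inter σ σ' => SatS σ ∩ SatS σ'
def SatC : TyC → Set (Option (Val × Store))
  | .omega => {r | ∀ V t, r = some (V, t) → Val.ClosedUnder 0 V ∧ Store.Closed t}
  | .prod δ σ => {r | ∃ V t, r = some (V, t) ∧ V ∈ SatD δ ∧ t ∈ SatS σ}
  | .inter κ κ' => SatC κ ∩ SatC κ'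
def SatT : TyT → Set Comp
  | .omega => {M | Comp.ClosedUnder 0 M}
  | .arrow σ κ => {M | Comp.ClosedUnder 0 M ∧ ∀ s ∈ SatS σ, run M s ∈ SatC κ}
  | .inter τ τ' => SatT τ ∩ SatT τ'
end

/-!
A store type constrains a store only through its entries at the locations of its domain.
Write `σ.atLoc ℓ` for the intersection of the types that `σ` assigns to `ℓ`. Subtyping
`σ ≤ σ'` shrinks the domain and gives `σ.atLoc ℓ ≤ σ'.atLoc ℓ`, so an induction on derivations
shows that `Γ ⊢ s : σ` holds iff `s` has, at every `ℓ ∈ dom σ`, an entry `u` with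
`Γ ⊢ u : σ.atLoc ℓ`. Part (a) follows since `set_ℓ(V, s)` and `s` have the same entries away
from `ℓ`; part (b) since the entry of `set_ℓ(V, s)` at `ℓ` is `V`, and
`σ.atLoc ℓ ≤ ⟨ℓ:δ⟩.atLoc ℓ = δ`.
-/

def TyS.atLoc : TyS → Loc → TyD
  | .loc ℓ' δ, ℓ => if ℓ' = ℓ then δ else .omega
  | .inter σ σ', ℓ => (σ.atLoc ℓ).inter (σ'.atLoc ℓ)
  | .omega, _ => .omega

def Store.lookup : Store → Loc → Option Lkp
  | .emp, _ => none
  | .upd ℓ' u s, ℓ => if ℓ' = ℓ then some u else s.lookup ℓ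

section StoreTypes

variable {Γ : Ctx} {ℓ : Loc}

@[simp]
theorem TyS.atLoc_loc_self (ℓ : Loc) (δ : TyD) : (TyS.loc ℓ δ).atLoc ℓ = δ := if_pos rfl

theorem SubS.domS_subset {σ σ' : TyS} : SubS σ σ' → σ'.domS ⊆ σ.domS
  | .refl _ => subset_rfl
  | .trans h₁ h₂ => h₂.domS_subset.trans h₁.domS_subset
  | .leOmega _ => by simp [TyS.domS]
  | .interLeft => by simp [TyS.domS]
  | .interRight => by simp [TyS.domS]
  | .interGlb h₁ h₂ => Finset.union_subset h₁.domS_subset h₂.domS_subset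
  | .interMono h₁ h₂ => Finset.union_subset_union h₁.domS_subset h₂.domS_subset
  | .locInter => by simp [TyS.domS]
  | .locMono _ => subset_rfl

theorem SubS.atLoc (ℓ : Loc) {σ σ' : TyS} : SubS σ σ' → SubD (σ.atLoc ℓ) (σ'.atLoc ℓ)
  | .refl _ => SubD.refl _
  | .trans h₁ h₂ => SubD.trans (h₁.atLoc ℓ) (h₂.atLoc ℓ)
  | .leOmega _ => SubD.leOmega _
  | .interLeft => SubD.interLeft
  | .interRight => SubD.interRight
  | .interGlb h₁ h₂ => SubD.interGlb (h₁.atLoc ℓ) (h₂.atLoc ℓ)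
  | .interMono h₁ h₂ => SubD.interMono (h₁.atLoc ℓ) (h₂.atLoc ℓ)
  | @SubS.locInter ℓ' _ _ => by
      by_cases h : ℓ' = ℓ
      · simpa [TyS.atLoc, h] using SubD.refl _
      · simpa [TyS.atLoc, h] using SubD.leOmega _
  | @SubS.locMono _ _ ℓ' hδ => by
      by_cases h : ℓ' = ℓ
      · simpa [TyS.atLoc, h] using hδ
      · simpa [TyS.atLoc, h] using SubD.refl _

theorem Store.lookup_upd_of_ne {ℓ ℓ' : Loc} (u : Lkp) (s : Store) (h : ℓ ≠ ℓ') :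
    (Store.upd ℓ u s).lookup ℓ' = s.lookup ℓ' := if_neg h

theorem TypS.exists_lookup {s : Store} {σ : TyS} : TypS Γ s σ → ℓ ∈ σ.domS →
    ∃ u, s.lookup ℓ = some u
  | .updA _, hℓ => by
      simp only [TyS.domS, Finset.mem_singleton] at hℓ
      subst hℓ
      exact ⟨_, if_pos rfl⟩
  | .updB hs hne, hℓ => by
      have ih := hs.exists_lookup hℓ
      obtain rfl : ℓ = _ := Finset.mem_singleton.mp hℓ
      simpa only [Store.lookup_upd_of_ne _ _ hne] using ih
  | .omega, hℓ => by simp [TyS.domS] at hℓ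
  | .inter h₁ h₂, hℓ => by
      simp only [TyS.domS, Finset.mem_union] at hℓ
      exact hℓ.elim h₁.exists_lookup h₂.exists_lookup
  | .sub hs hsub, hℓ => hs.exists_lookup (hsub.domS_subset hℓ)

theorem TypS.typL_atLoc_of_lookup_eq {s : Store} {σ : TyS} {u : Lkp} :
    TypS Γ s σ → s.lookup ℓ = some u → TypL Γ u (σ.atLoc ℓ)
  | @TypS.updA _ u' δ ℓ' _ hu', h => by
      by_cases hℓ : ℓ' = ℓ
      · simp only [Store.lookup, hℓ, if_true, Option.some.injEq] at h
        simpa [TyS.atLoc, hℓ, ← h] using hu'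
      · simpa [TyS.atLoc, hℓ] using TypL.omega
  | @TypS.updB _ s₀ ℓ' δ ℓ₀ _ hs hne, h => by
      by_cases hℓ : ℓ₀ = ℓ
      · simpa [TyS.atLoc, ← hℓ, Ne.symm hne] using TypL.omega
      · exact hs.typL_atLoc_of_lookup_eq (by simpa [Store.lookup, hℓ] using h)
  | .omega, _ => TypL.omega
  | .inter h₁ h₂, h =>
      TypL.inter (h₁.typL_atLoc_of_lookup_eq h) (h₂.typL_atLoc_of_lookup_eq h)
  | .sub hs hsub, h => TypL.sub (hs.typL_atLoc_of_lookup_eq h) (hsub.atLoc ℓ)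

theorem TypS.loc_of_lookup_eq {δ : TyD} {u : Lkp} (hu : TypL Γ u δ) :
    ∀ {s : Store}, s.lookup ℓ = some u → TypS Γ s (.loc ℓ δ)
  | .emp, h => by simp [Store.lookup] at h
  | .upd ℓ' u' s, h => by
      by_cases hℓ : ℓ' = ℓ
      · simp only [Store.lookup, hℓ, if_true, Option.some.injEq] at h
        exact hℓ ▸ h ▸ TypS.updA hu
      · exact TypS.updB (loc_of_lookup_eq hu (by simpa [Store.lookup, hℓ] using h)) hℓ

theorem TypS.of_lookup {s : Store} : ∀ {σ : TyS},
    (∀ ℓ ∈ σ.domS, ∃ u, s.lookup ℓ = some u ∧ TypL Γ u (σ.atLoc ℓ)) → TypS Γ s σ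
  | .loc ℓ δ, H => by
      obtain ⟨u, hu, hty⟩ := H ℓ (by simp [TyS.domS])
      exact TypS.loc_of_lookup_eq (by simpa using hty) hu
  | .inter σ₁ σ₂, H => by
      refine TypS.inter (of_lookup fun ℓ hℓ => ?_) (of_lookup fun ℓ hℓ => ?_)
      · obtain ⟨u, hu, hty⟩ := H ℓ (Finset.mem_union_left _ hℓ)
        exact ⟨u, hu, TypL.sub hty SubD.interLeft⟩
      · obtain ⟨u, hu, hty⟩ := H ℓ (Finset.mem_union_right _ hℓ)
        exact ⟨u, hu, TypL.sub hty SubD.interRight⟩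
  | .omega, _ => TypS.omega

theorem TypS.of_lookup_eq {s t : Store} {σ : TyS} (hs : TypS Γ s σ)
    (h : ∀ ℓ ∈ σ.domS, s.lookup ℓ = t.lookup ℓ) : TypS Γ t σ :=
  TypS.of_lookup fun ℓ hℓ => by
    obtain ⟨u, hu⟩ := hs.exists_lookup hℓ
    exact ⟨u, h ℓ hℓ ▸ hu, hs.typL_atLoc_of_lookup_eq hu⟩

theorem typS_iff_of_lookup_eq {s t : Store} {σ : TyS}
    (h : ∀ ℓ ∈ σ.domS, s.lookup ℓ = t.lookup ℓ) : TypS Γ s σ ↔ TypS Γ t σ :=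
  ⟨fun hs => hs.of_lookup_eq h, fun ht => ht.of_lookup_eq fun ℓ hℓ => (h ℓ hℓ).symm⟩

theorem TypL.typV_of_eq_val {u : Lkp} {V : Val} {δ : TyD} :
    TypL Γ u δ → u = .val V → TypV Γ V δ
  | .val hV, rfl => hV
  | .lkp _, h => Lkp.noConfusion h
  | .omega, _ => TypV.omega
  | .inter h₁ h₂, h => TypV.inter (h₁.typV_of_eq_val h) (h₂.typV_of_eq_val h)
  | .sub h' hsub, h => TypV.sub (h'.typV_of_eq_val h) hsub

end StoreTypes

/-- restriction lemma for store typing. -/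
theorem restriction_lemma :
    (∀ (Γ : Ctx) (ℓ : Loc) (V : Val) (s : Store) (σ : TyS), ℓ ∉ σ.domS →
      (TypS Γ s σ ↔ TypS Γ (.upd ℓ (.val V) s) σ)) ∧
    (∀ (Γ : Ctx) (ℓ : Loc) (V : Val) (s : Store) (σ : TyS) (δ : TyD),
      TypS Γ (.upd ℓ (.val V) s) σ → SubS σ (.loc ℓ δ) →
      ¬ SubS .omega (.loc ℓ δ) → TypV Γ V δ) := by
  refine ⟨fun Γ ℓ V s σ hℓ => ?_, fun Γ ℓ V s σ δ hs hsub _ => ?_⟩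
  · refine typS_iff_of_lookup_eq fun ℓ' hℓ' => (Store.lookup_upd_of_ne _ _ ?_).symm
    rintro rfl
    exact hℓ hℓ'
  · have hV : TypL Γ (.val V) (σ.atLoc ℓ) := hs.typL_atLoc_of_lookup_eq (if_pos rfl)
    simpa using (TypL.sub hV (hsub.atLoc ℓ)).typV_of_eq_val rfl
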